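/- Suppose φ, y, ρ, H solve the flat scalar-field system on [t₀, ∞) with the Friedmann constraint 3H² = ρ + (1/2)y² + V(φ), where V(φ) ≥ 0 for all φ and H(t₀) > 0 and H(t) > 0 for all t ≥ t₀. Then ρ(t) → 0 as t → ∞, without any boundedness assumption on V'. -/

import Mathlib

open Filter

/-! While `ρ ≥ c > 0`, the equation for `H'` gives `H' ≤ -γc/2`, so `H` would become
negative in finite time. Hence `ρ` drops below every `c > 0`, and since `ρ' = -3γρH ≤ 0`
it stays there. -/

theorem antitoneOn_Ici_of_hasDerivWithinAt_nonpos {t₀ : ℝ} {f f' : ℝ → ℝ}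
    (hf : ∀ t ∈ Set.Ici t₀, HasDerivWithinAt f (f' t) (Set.Ici t₀) t)
    (hf' : ∀ t ∈ Set.Ici t₀, f' t ≤ 0) : AntitoneOn f (Set.Ici t₀) := by
  refine antitoneOn_of_hasDerivWithinAt_nonpos (f' := f') (convex_Ici t₀)
    (fun t ht => (hf t ht).continuousWithinAt) (fun t ht => ?_) (fun t ht => ?_)
  · rw [interior_Ici] at ht ⊢
    exact (hf t (Set.Ioi_subset_Ici_self ht)).mono Set.Ioi_subset_Ici_self
  · rw [interior_Ici] at ht
    exact hf' t (Set.Ioi_subset_Ici_self ht)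

theorem exists_neg_of_hasDerivWithinAt_le_neg {t₀ δ : ℝ} {f f' : ℝ → ℝ} (hδ : 0 < δ)
    (hf : ∀ t ∈ Set.Ici t₀, HasDerivWithinAt f (f' t) (Set.Ici t₀) t)
    (hf' : ∀ t ∈ Set.Ici t₀, f' t ≤ -δ) : ∃ t ∈ Set.Ici t₀, f t < 0 := by
  have hanti : AntitoneOn (fun t => f t + δ * t) (Set.Ici t₀) :=
    antitoneOn_Ici_of_hasDerivWithinAt_nonpos (f' := fun t => f' t + δ)
      (fun t ht => (hf t ht).add
        (((hasDerivWithinAt_id t _).const_mul δ).congr_deriv (mul_one δ)))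
      (fun t ht => by linarith [hf' t ht])
  -- `f T ≤ f t₀ - δ (T - t₀) = f t₀ - |f t₀| - 1`
  set T := t₀ + (|f t₀| + 1) / δ
  have hT : t₀ ≤ T := le_add_of_nonneg_right (by positivity)
  have hδT : δ * T = δ * t₀ + (|f t₀| + 1) := by
    simp only [T]
    field_simp
  refine ⟨T, hT, ?_⟩
  have := hanti Set.self_mem_Ici hT hT
  simp only [hδT] at this
  linarith [le_abs_self (f t₀)]

theorem tendsto_zero_of_antitoneOn_Ici {t₀ : ℝ} {f : ℝ → ℝ}
    (hanti : AntitoneOn f (Set.Ici t₀))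
    (hnonneg : ∀ t ∈ Set.Ici t₀, 0 ≤ f t)
    (hsmall : ∀ ε > 0, ∃ s ∈ Set.Ici t₀, f s < ε) :
    Tendsto f atTop (nhds 0) := by
  rw [NormedAddGroup.tendsto_nhds_zero]
  intro ε hε
  obtain ⟨s, hs, hsε⟩ := hsmall ε hε
  filter_upwards [eventually_ge_atTop s] with t hst
  have ht : t ∈ Set.Ici t₀ := le_trans hs hst
  rw [Real.norm_of_nonneg (hnonneg t ht)]
  exact (hanti hs ht hst).trans_lt hsε

theorem stmt_6_general (t₀ γ : ℝ) (hγ0 : 0 < γ)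
    (y ρ H : ℝ → ℝ)
    (hρ : ∀ t ∈ Set.Ici t₀, HasDerivWithinAt ρ (-3 * γ * ρ t * H t) (Set.Ici t₀) t)
    (hH : ∀ t ∈ Set.Ici t₀,
      HasDerivWithinAt H (-(1 / 2) * y t ^ 2 - γ / 2 * ρ t) (Set.Ici t₀) t)
    (hρ0 : ∀ t ∈ Set.Ici t₀, 0 ≤ ρ t)
    (hHpos : ∀ t ∈ Set.Ici t₀, 0 < H t) :
    Tendsto ρ atTop (nhds 0) := by
  have hρanti : AntitoneOn ρ (Set.Ici t₀) :=
    antitoneOn_Ici_of_hasDerivWithinAt_nonpos hρ fun t ht => by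
      have := mul_nonneg (mul_nonneg hγ0.le (hρ0 t ht)) (hHpos t ht).le
      linarith
  refine tendsto_zero_of_antitoneOn_Ici hρanti hρ0 fun ε hε => ?_
  by_contra! hlarge
  obtain ⟨t, ht, hHneg⟩ :=
    exists_neg_of_hasDerivWithinAt_le_neg (half_pos (mul_pos hγ0 hε)) hH fun t ht => by
      nlinarith [sq_nonneg (y t), hlarge t ht]
  exact (hHpos t ht).not_gt hHneg

/-- Remark after Proposition 2: for the flat scalar-field system with a non-negative
potential and an ever-expanding universe (`H > 0` on `[t₀, ∞)`), the matter density
satisfies `ρ(t) → 0` as `t → ∞`, without any boundedness assumption on `V'`. -/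
theorem stmt_6 (t₀ γ : ℝ) (hγ0 : 0 < γ) (hγ2 : γ ≤ 2)
    (V : ℝ → ℝ) (hV : ContDiff ℝ 2 V)
    (φ y ρ H : ℝ → ℝ)
    (hφ : ∀ t ∈ Set.Ici t₀, HasDerivWithinAt φ (y t) (Set.Ici t₀) t)
    (hy : ∀ t ∈ Set.Ici t₀,
      HasDerivWithinAt y (-3 * H t * y t - deriv V (φ t)) (Set.Ici t₀) t)
    (hρ : ∀ t ∈ Set.Ici t₀, HasDerivWithinAt ρ (-3 * γ * ρ t * H t) (Set.Ici t₀) t)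
    (hH : ∀ t ∈ Set.Ici t₀,
      HasDerivWithinAt H (-(1 / 2) * y t ^ 2 - γ / 2 * ρ t) (Set.Ici t₀) t)
    (hρ0 : ∀ t ∈ Set.Ici t₀, 0 ≤ ρ t)
    (hcon : ∀ t ∈ Set.Ici t₀, 3 * H t ^ 2 = ρ t + 1 / 2 * y t ^ 2 + V (φ t))
    (hVnn : ∀ s : ℝ, 0 ≤ V s)
    (hH0 : 0 < H t₀)
    (hHpos : ∀ t ∈ Set.Ici t₀, 0 < H t) :
    Tendsto ρ atTop (nhds 0) :=
  stmt_6_general t₀ γ hγ0 y ρ H hρ hH hρ0 hHpos
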